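/- Let A be an n×n real matrix that is Monge (every 2×2 minor tropically nonnegative), and let η₁ ≥ η₂ ≥ ⋯ ≥ η_n be the diagonal entries of A sorted in decreasing order. Then for every k, the coefficient a_k := max over subsets I ⊆ [n] of size k of the tropical permanent of the principal submatrix A_{I,I} equals η₁ + η₂ + ⋯ + η_k, the sum of the k largest diagonal entries. -/

import Mathlib

/-!
On a Monge matrix, uncrossing an inversion of a permutation never decreases its weight
`∑ A i (σ i)`. Repeatedly uncrossing at the largest index of the support turns any permutation
supported on `I` into the identity, so the tropical permanent of `A_{I,I}` is its diagonal sum.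
Among the diagonal sums over `k`-element sets, the `k` largest diagonal entries win.
-/

open Finset Equiv

variable {ι R : Type*}

def Matrix.IsMonge [LinearOrder ι] [Add R] [LE R] (A : Matrix ι ι R) : Prop :=
  ∀ i j k l, i < j → k < l → A i l + A j k ≤ A i k + A j l

namespace Matrix.IsMonge

variable [LinearOrder ι] [AddCommMonoid R] [PartialOrder R] [IsOrderedAddMonoid R]
  {A : Matrix ι ι R}

theorem sum_le_sum_mul_swap (hA : A.IsMonge) {s : Finset ι} {σ : Perm ι} {i j : ι}
    (hi : i ∈ s) (hj : j ∈ s) (hij : i < j) (hσ : σ j < σ i) :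
    ∑ x ∈ s, A x (σ x) ≤ ∑ x ∈ s, A x ((σ * Equiv.swap i j) x) := by
  have hj' : j ∈ s.erase i := mem_erase.2 ⟨hij.ne', hj⟩
  have rest : ∀ x ∈ (s.erase i).erase j, A x ((σ * Equiv.swap i j) x) = A x (σ x) := by
    intro x hx
    obtain ⟨hxj, hxi, -⟩ := mem_erase.1 hx |>.imp_right mem_erase.1
    rw [Perm.mul_apply, swap_apply_of_ne_of_ne hxi hxj]
  rw [← add_sum_erase s _ hi, ← add_sum_erase _ _ hj', ← add_sum_erase s _ hi,
    ← add_sum_erase _ _ hj', sum_congr rfl rest, ← add_assoc, ← add_assoc]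
  simp only [Perm.mul_apply, swap_apply_left, swap_apply_right]
  exact add_le_add_left (hA i j (σ j) (σ i) hij hσ) _

theorem sum_apply_perm_le_sum_diag (hA : A.IsMonge) (s : Finset ι) {σ : Perm ι}
    (hσ : ∀ x ∉ s, σ x = x) : ∑ x ∈ s, A x (σ x) ≤ ∑ x ∈ s, A x x := by
  classical
  induction s using Finset.induction_on_max generalizing σ with
  | empty => simp
  | insert a s has ih =>
    have ha : a ∉ s := fun h => lt_irrefl a (has a h)
    have of_fixed : ∀ τ : Perm ι, (∀ x ∉ insert a s, τ x = x) → τ a = a →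
        ∑ x ∈ insert a s, A x (τ x) ≤ ∑ x ∈ insert a s, A x x := by
      intro τ hτ hτa
      rw [sum_insert ha, sum_insert ha, hτa]
      refine add_le_add_right (ih fun x hx => ?_) _
      by_cases hxa : x = a
      · exact hxa ▸ hτa
      · exact hτ x (by simp [hxa, hx])
    by_cases hσa : σ a = a
    · exact of_fixed σ hσ hσa
    set b := σ.symm a
    have hσb : σ b = a := σ.apply_symm_apply a
    have hb : b ∈ s := by
      have hba : b ≠ a := fun h => hσa (h ▸ hσb)
      have : b ∈ insert a s := by_contra fun h => hba (hσb ▸ (hσ b h).symm)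
      exact (mem_insert.1 this).resolve_left hba
    have hσa_mem : σ a ∈ s := by
      have : σ a ∈ insert a s := by_contra fun h => hσa (σ.injective (hσ _ h))
      exact (mem_insert.1 this).resolve_left hσa
    calc ∑ x ∈ insert a s, A x (σ x)
        ≤ ∑ x ∈ insert a s, A x ((σ * Equiv.swap b a) x) :=
          hA.sum_le_sum_mul_swap (mem_insert_of_mem hb) (mem_insert_self a s) (has b hb)
            (hσb ▸ has _ hσa_mem)
      _ ≤ ∑ x ∈ insert a s, A x x := by
        refine of_fixed _ (fun x hx => ?_) (by rw [Perm.mul_apply, swap_apply_right, hσb])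
        have hxa : x ≠ a := fun h => hx (h ▸ mem_insert_self a s)
        have hxb : x ≠ b := fun h => hx (h ▸ mem_insert_of_mem hb)
        rw [Perm.mul_apply, swap_apply_of_ne_of_ne hxb hxa, hσ x hx]

end Matrix.IsMonge

section TopSums

variable [AddCommMonoid R] [LinearOrder R] [IsOrderedCancelAddMonoid R]

theorem Finset.sum_le_sum_of_card_eq_of_forall_sdiff_le [DecidableEq ι] {f : ι → R} {s t : Finset ι}
    (hst : #s = #t) (h : ∀ x ∈ s \ t, ∀ y ∈ t \ s, f x ≤ f y) :
    ∑ x ∈ s, f x ≤ ∑ x ∈ t, f x := by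
  rw [← sum_sdiff_le_sum_sdiff]
  rcases (s \ t).eq_empty_or_nonempty with hs | hs
  · have ht : t \ s = ∅ := card_eq_zero.1 (by rw [← card_sdiff_comm hst, hs, card_empty])
    simp [hs, ht]
  calc ∑ x ∈ s \ t, f x ≤ #(s \ t) • (s \ t).sup' hs f :=
        sum_le_card_nsmul _ _ _ fun x hx => le_sup' f hx
    _ = #(t \ s) • (s \ t).sup' hs f := by rw [card_sdiff_comm hst]
    _ ≤ ∑ y ∈ t \ s, f y :=
        card_nsmul_le_sum _ _ _ fun y hy => sup'_le hs f fun x hx => h x hx y hy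

theorem Antitone.sum_le_sum_of_isLowerSet [LinearOrder ι] {f : ι → R} (hf : Antitone f)
    {s t : Finset ι} (ht : IsLowerSet (t : Set ι)) (hst : #s = #t) :
    ∑ x ∈ s, f x ≤ ∑ x ∈ t, f x :=
  sum_le_sum_of_card_eq_of_forall_sdiff_le hst fun _ hx _ hy =>
    hf (le_of_not_ge fun hxy => (mem_sdiff.1 hx).2 (ht hxy (mem_sdiff.1 hy).1))

end TopSums

/-- For an n×n real Monge matrix, the coefficient a_k of the tropical characteristic
polynomial (max over principal submatrices of size k of the tropical permanent)
equals the sum of the k largest diagonal entries. -/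
theorem monge_char_poly_coefficient (n : ℕ) (A : Matrix (Fin n) (Fin n) ℝ)
    (hMonge : ∀ i j k l : Fin n, i < j → k < l → A i l + A j k ≤ A i k + A j l)
    (η : Fin n → ℝ) (hη : Antitone η)
    (e : Equiv.Perm (Fin n)) (he : ∀ i, η i = A (e i) (e i))
    (k : ℕ) (hk : k ≤ n) :
    IsGreatest {x : ℝ | ∃ (I : Finset (Fin n)) (σ : Equiv.Perm (Fin n)),
        I.card = k ∧ (∀ i ∉ I, σ i = i) ∧ x = ∑ i ∈ I, A i (σ i)}
      (∑ i : Fin n, if (i : ℕ) < k then η i else 0) := by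
  classical
  set I₀ : Finset (Fin n) := {i | (i : ℕ) < k}
  have hI₀ : #I₀ = k := by simp [I₀, Fin.card_filter_val_lt, hk]
  have hI₀_lower : IsLowerSet (I₀ : Set (Fin n)) := fun a b hba ha => by
    simp only [I₀, coe_filter, mem_univ, true_and, Set.mem_ofPred_eq] at ha ⊢
    exact lt_of_le_of_lt hba ha
  rw [← sum_filter]
  refine ⟨⟨I₀.map e.toEmbedding, 1, by simp [hI₀], fun _ _ => rfl, by simp [I₀, he]⟩, ?_⟩
  rintro _ ⟨I, σ, rfl, hσ, rfl⟩
  calc ∑ i ∈ I, A i (σ i) ≤ ∑ i ∈ I, A i i :=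
        Matrix.IsMonge.sum_apply_perm_le_sum_diag hMonge I hσ
    _ = ∑ j ∈ I.map e.symm.toEmbedding, η j := by simp [he]
    _ ≤ ∑ i ∈ I₀, η i := hη.sum_le_sum_of_isLowerSet hI₀_lower (by simp [hI₀])
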